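/- Let f: T → T be a train track map with stretch factor λ_f representing φ, and let T_∞ be the limit ℝ-tree of the sequence of rescaled metrics d_n(x,y) = d_T(f^n(x), f^n(y))/λ_f^n. Then the action of G on T_∞ is non-trivial, i.e., no point of T_∞ is fixed by all of G. -/

import Mathlib

/-!
Common vocabulary for relative train track theory on free products
`G = H₁ * ⋯ * H_p * F_k`, following Bestvina–Handel, Dahmani–Li and Mutanguha.
-/

open scoped Classical

namespace RelTT

section GroupDefs

variable (G : Type) [Group G]

/-- The conjugate subgroup `g K g⁻¹`. -/
def conjSub (g : G) (K : Subgroup G) : Subgroup G :=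
  Subgroup.map (MulAut.conj g).toMonoidHom K

/-- The family consisting of the subgroups `H i` together with a free group of rank `k`. -/
def factorFamily (p k : ℕ) (H : Fin p → Subgroup G) : Fin p ⊕ Unit → Type :=
  fun j => Sum.elim (fun i => ↥(H i)) (fun _ => FreeGroup (Fin k)) j

instance factorFamilyGroup (p k : ℕ) (H : Fin p → Subgroup G) :
    (j : Fin p ⊕ Unit) → Group (factorFamily G p k H j)
  | Sum.inl i => inferInstanceAs (Group ↥(H i))
  | Sum.inr _ => inferInstanceAs (Group (FreeGroup (Fin k)))

/-- The canonical homomorphism from the abstract free product of the `H i` and the free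
group of rank `k` (with prescribed images `a` of the free basis) to `G`. -/
noncomputable def decompHom (p k : ℕ) (H : Fin p → Subgroup G) (a : Fin k → G) :
    Monoid.CoprodI (factorFamily G p k H) →* G :=
  Monoid.CoprodI.lift fun j =>
    match j with
    | Sum.inl i => ((H i).subtype : factorFamily G p k H (Sum.inl i) →* G)
    | Sum.inr u => (FreeGroup.lift a : factorFamily G p k H (Sum.inr u) →* G)

/-- `G = H₁ * ⋯ * H_p * F_k`, where the free factor `F_k` is the free group on the
(free basis) images `a : Fin k → G`. -/
noncomputable def IsFreeProductDecomp (p k : ℕ) (H : Fin p → Subgroup G) (a : Fin k → G) : Prop :=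
  Function.Bijective (decompHom G p k H a)

/-- `φ` is strictly type-preserving relative to `𝒢 = {[H₁],…,[H_p]}`: it sends each
conjugate of each `H i` onto a conjugate of some `H j`. -/
def StrictlyTypePreserving {p : ℕ} (H : Fin p → Subgroup G) (φ : G →* G) : Prop :=
  ∀ (i : Fin p) (g : G), ∃ (j : Fin p) (g' : G),
    Subgroup.map φ (conjSub G g (H i)) = conjSub G g' (H j)

/-- The system of conjugacy classes of `H` is dominated by that of `K`: each `H i` is
conjugate into some `K j`. -/
def SystemLE {p q : ℕ} (H : Fin p → Subgroup G) (K : Fin q → Subgroup G) : Prop :=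
  ∀ i, ∃ (j : Fin q) (g : G), H i ≤ conjSub G g (K j)

/-- The collection of conjugacy classes of the `K j` is `φ`-invariant. -/
def SystemInvariant {q : ℕ} (φ : G →* G) (K : Fin q → Subgroup G) : Prop :=
  ∀ j, ∃ (l : Fin q) (g : G), Subgroup.map φ (K j) ≤ conjSub G g (K l)

/-- `φ` is irreducible relative to `𝒢 = {[H₁],…,[H_p]}`: there is no proper `φ`-invariant
free factor system of `G` strictly containing `𝒢`. -/
noncomputable def IrreducibleRel {p : ℕ} (H : Fin p → Subgroup G) (φ : G →* G) : Prop :=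
  ¬ ∃ (q k' : ℕ) (K : Fin q → Subgroup G) (b : Fin k' → G),
      IsFreeProductDecomp G q k' K b ∧ SystemInvariant G φ K ∧
      SystemLE G H K ∧ ¬ SystemLE G K H ∧ (∀ j, K j ≠ ⊤)

/-- The `n`-th iterate of an endomorphism, as a monoid homomorphism. -/
def iterHom (φ : G →* G) : ℕ → (G →* G)
  | 0 => MonoidHom.id G
  | n + 1 => φ.comp (iterHom φ n)

/-- `φ` is fully irreducible relative to `𝒢`: every positive power of `φ` is irreducible
relative to `𝒢`. -/
noncomputable def FullyIrreducibleRel {p : ℕ} (H : Fin p → Subgroup G) (φ : G →* G) : Prop :=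
  ∀ n : ℕ, 0 < n → IrreducibleRel G H (iterHom G φ n)

end GroupDefs

/-- A metric simplicial `G`-tree: a simplicial tree with positive edge lengths and a
simplicial, length-preserving `G`-action. -/
structure GTree (G : Type) [Group G] where
  V : Type
  graph : SimpleGraph V
  isTree : graph.IsTree
  len : V → V → ℝ
  len_pos : ∀ {u v : V}, graph.Adj u v → 0 < len u v
  len_symm : ∀ u v : V, len u v = len v u
  act : G → V ≃ V
  act_one : act 1 = Equiv.refl V
  act_mul : ∀ (g h : G) (v : V), act (g * h) v = act g (act h v)
  act_adj : ∀ (g : G) {u v : V}, graph.Adj u v → graph.Adj (act g u) (act g v)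
  act_len : ∀ (g : G) (u v : V), len (act g u) (act g v) = len u v

namespace GTree

variable {G : Type} [Group G] (T : GTree G)

/-- The action of `g` as a graph homomorphism. -/
def actHom (g : G) : T.graph →g T.graph where
  toFun := ⇑(T.act g)
  map_rel' := fun h => T.act_adj g h

/-- The action of `g` on darts (oriented edges). -/
def dartAct (g : G) (d : T.graph.Dart) : T.graph.Dart :=
  ⟨(T.act g d.fst, T.act g d.snd), T.act_adj g d.adj⟩

/-- Two darts lie in the same `G`-orbit of (unoriented) edges. -/
def SameEdgeOrbit (d d' : T.graph.Dart) : Prop :=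
  ∃ g : G, T.dartAct g d = d' ∨ T.dartAct g d = d'.symm

/-- The stabilizer of a vertex. -/
def stab (v : T.V) : Subgroup G where
  carrier := {g : G | T.act g v = v}
  one_mem' := by
    show T.act 1 v = v
    rw [T.act_one]; rfl
  mul_mem' := by
    intro a b ha hb
    have ha' : T.act a v = v := ha
    have hb' : T.act b v = v := hb
    show T.act (a * b) v = v
    rw [T.act_mul, hb', ha']
  inv_mem' := by
    intro a ha
    have ha' : T.act a v = v := ha
    show T.act a⁻¹ v = v
    calc T.act a⁻¹ v = T.act a⁻¹ (T.act a v) := by rw [ha']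
      _ = T.act (a⁻¹ * a) v := (T.act_mul _ _ _).symm
      _ = v := by rw [inv_mul_cancel, T.act_one]; rfl

/-- A vertex is non-free if it has nontrivial stabilizer. -/
def NonFree (v : T.V) : Prop :=
  ∃ g : G, g ≠ 1 ∧ T.act g v = v

/-- The geodesic (the unique embedded path) joining two vertices of the tree. -/
noncomputable def geodesic (u v : T.V) : T.graph.Walk u v :=
  (T.isTree.existsUnique_path u v).choose

/-- Tightening of a path: the geodesic joining its endpoints. -/
noncomputable def tighten {u v : T.V} (_w : T.graph.Walk u v) : T.graph.Walk u v :=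
  T.geodesic u v

/-- The metric length of a walk. -/
def walkLen {u v : T.V} (w : T.graph.Walk u v) : ℝ :=
  (w.darts.map fun d => T.len d.fst d.snd).sum

/-- A walk is reduced (without cancellation) if it has no backtracking. -/
def Reduced {u v : T.V} (w : T.graph.Walk u v) : Prop :=
  List.Chain' (fun d d' => d' ≠ d.symm) w.darts

end GTree

/-- Membership in the outer space `𝒯_𝒢` of `(G, 𝒢)` (conditions (0)–(3) of the paper). -/
structure InOuterSpace {G : Type} [Group G] {p : ℕ} (H : Fin p → Subgroup G)
    (T : GTree G) : Prop where
  /-- The action is nontrivial: no global fixed vertex. -/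
  nontrivial_action : ¬ ∃ v : T.V, ∀ g : G, T.act g v = v
  /-- The action is minimal: any nonempty invariant subtree is everything. -/
  minimal : ∀ S : Set T.V, S.Nonempty →
      (∀ (g : G) (v : T.V), v ∈ S → T.act g v ∈ S) →
      (∀ u ∈ S, ∀ v ∈ S, ∀ w : T.graph.Walk u v, w.IsPath → ∀ x ∈ w.support, x ∈ S) →
      S = Set.univ
  /-- Edge stabilizers are trivial. -/
  trivial_edge_stab : ∀ (g : G) (u v : T.V), T.graph.Adj u v →
      T.act g u = u → T.act g v = v → g = 1
  /-- There are finitely many orbits of edges. -/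
  fin_edge_orbits : ∃ (n : ℕ) (e : Fin n → T.graph.Dart),
      ∀ d : T.graph.Dart, ∃ i : Fin n, T.SameEdgeOrbit (e i) d
  /-- There are no redundant vertices. -/
  no_redundant : ∀ v : T.V, (T.graph.neighborSet v).ncard = 2 →
      (∀ g : G, T.act g v = v → ∀ u : T.V, T.graph.Adj v u → T.act g u = u) → False
  /-- Each conjugate of each `H i` fixes a unique vertex. -/
  fixed_vertices : ∀ (i : Fin p) (g : G), ∃! v : T.V, conjSub G g (H i) ≤ T.stab v
  /-- Vertex stabilizers are conjugates of the `H i`, all other vertices are free. -/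
  stabilizers : ∀ v : T.V,
      (∃ (i : Fin p) (g : G), T.stab v = conjSub G g (H i)) ∨ T.stab v = ⊥

/-- A `𝒢`-relative weak representative of an injective endomorphism `φ`: a `φ`-equivariant
map `f : T → T`, recorded by its values on vertices and the edge paths crossed by the images
of edges. -/
structure WeakRep {G : Type} [Group G] (φ : G →* G) (T : GTree G) where
  vmap : T.V → T.V
  emap : ∀ {u v : T.V}, T.graph.Adj u v → T.graph.Walk (vmap u) (vmap v)
  equivariant : ∀ (g : G) (v : T.V), vmap (T.act g v) = T.act (φ g) (vmap v)
  emap_equivariant : ∀ (g : G) {u v : T.V} (h : T.graph.Adj u v),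
      (emap (T.act_adj g h)).darts = ((emap h).map (T.actHom (φ g))).darts
  emap_symm : ∀ {u v : T.V} (h : T.graph.Adj u v),
      emap h.symm = (emap h).reverse

namespace WeakRep

variable {G : Type} [Group G] {φ : G →* G} {T : GTree G}

/-- The image path of a dart. -/
def dwalk (f : WeakRep φ T) (d : T.graph.Dart) :
    T.graph.Walk (f.vmap d.fst) (f.vmap d.snd) :=
  f.emap d.adj

/-- The image of a walk under the map `f`. -/
def mapWalk (f : WeakRep φ T) : ∀ {u v : T.V},
    T.graph.Walk u v → T.graph.Walk (f.vmap u) (f.vmap v)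
  | _, _, SimpleGraph.Walk.nil => SimpleGraph.Walk.nil
  | _, _, SimpleGraph.Walk.cons h p => (f.emap h).append (f.mapWalk p)

/-- The image of a walk under the `k`-th iterate `f^k`. -/
def mapWalkIter (f : WeakRep φ T) : (k : ℕ) → ∀ {u v : T.V},
    T.graph.Walk u v → T.graph.Walk (f.vmap^[k] u) (f.vmap^[k] v)
  | 0, _, _, w => w
  | k + 1, u, v, w =>
      (f.mapWalkIter k (f.mapWalk w)).copy
        (Function.iterate_succ_apply f.vmap k u).symm
        (Function.iterate_succ_apply f.vmap k v).symm

/-- `f` is tight: on each edge it is injective in the interior, i.e. the image of each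
edge is an embedded path (possibly a vertex). -/
def Tight (f : WeakRep φ T) : Prop :=
  ∀ d : T.graph.Dart, (f.dwalk d).IsPath

/-- Two darts with the same origin belong to the same gate if their images under `f` have
the same initial segment. -/
def gateEq (f : WeakRep φ T) (d d' : T.graph.Dart) : Prop :=
  d.fst = d'.fst ∧ (f.dwalk d).darts.head? = (f.dwalk d').darts.head?

/-- A turn is legal if the two darts issue from the same vertex but lie in distinct gates. -/
def LegalTurn (f : WeakRep φ T) (d d' : T.graph.Dart) : Prop :=
  d.fst = d'.fst ∧ (f.dwalk d).darts.head? ≠ (f.dwalk d').darts.head?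

/-- A walk is legal if every turn crossed is legal. -/
def LegalWalk (f : WeakRep φ T) {u v : T.V} (w : T.graph.Walk u v) : Prop :=
  List.Chain' (fun d d' => f.LegalTurn d.symm d') w.darts

/-- `f` is a train track map: edges are sent to nondegenerate legal paths, and legal
turns are sent to legal turns. -/
structure IsTrainTrack (f : WeakRep φ T) : Prop where
  edges_nondegenerate : ∀ d : T.graph.Dart, 0 < (f.dwalk d).length
  edges_legal : ∀ d : T.graph.Dart, f.LegalWalk (f.dwalk d)
  turns_legal : ∀ d d' : T.graph.Dart, f.LegalTurn d d' →
    ∀ x y : T.graph.Dart, (f.dwalk d).darts.head? = some x →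
      (f.dwalk d').darts.head? = some y → f.LegalTurn x y

/-- Every point of the tree is in the image of `f` (surjectivity of a simplicial map,
expressed by saying that every edge is crossed by the image of some edge). -/
def CoversAll (f : WeakRep φ T) : Prop :=
  ∀ d : T.graph.Dart, ∃ d' : T.graph.Dart,
    d ∈ (f.dwalk d').darts ∨ d.symm ∈ (f.dwalk d').darts

/-- The number of illegal turns of a walk. -/
noncomputable def illegalCount (f : WeakRep φ T) {u v : T.V} (w : T.graph.Walk u v) : ℕ :=
  (w.darts.zip w.darts.tail).countP fun q => decide (¬ f.LegalTurn q.1.symm q.2)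

/-- `ρ` satisfies the Nielsen condition with period `n`: `[f^n(ρ)] = g·ρ` for some `g ∈ G`. -/
noncomputable def NielsenPeriod (f : WeakRep φ T) {u v : T.V} (ρ : T.graph.Walk u v)
    (n : ℕ) : Prop :=
  ∃ g : G, f.vmap^[n] u = T.act g u ∧ f.vmap^[n] v = T.act g v ∧
    (T.tighten (f.mapWalkIter n ρ)).darts = (ρ.map (T.actHom g)).darts

/-- A Nielsen path: a geodesic `ρ` with `[f^N(ρ)] = g·ρ` for some `N > 0`, `g ∈ G`. -/
noncomputable def IsNielsen (f : WeakRep φ T) {u v : T.V} (ρ : T.graph.Walk u v) : Prop :=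
  ρ.IsPath ∧ ∃ n : ℕ, 0 < n ∧ f.NielsenPeriod ρ n

/-- A pre-Nielsen path: `[f^N(ρ)] = g·ρ` for some `N > 0`, `g ∈ G`. -/
noncomputable def IsPreNielsen (f : WeakRep φ T) {u v : T.V} (ρ : T.graph.Walk u v) : Prop :=
  ∃ n : ℕ, 0 < n ∧ f.NielsenPeriod ρ n

/-- An indivisible Nielsen path: a Nielsen path which is not a concatenation of
shorter Nielsen paths. -/
noncomputable def IsIndivisibleNielsen (f : WeakRep φ T) {u v : T.V}
    (ρ : T.graph.Walk u v) : Prop :=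
  f.IsNielsen ρ ∧ ¬ ∃ (x : T.V) (ρ₁ : T.graph.Walk u x) (ρ₂ : T.graph.Walk x v),
    ρ = ρ₁.append ρ₂ ∧ 0 < ρ₁.length ∧ 0 < ρ₂.length ∧ f.IsNielsen ρ₁ ∧ f.IsNielsen ρ₂

/-- An indivisible pre-Nielsen path. -/
noncomputable def IsIndivisiblePreNielsen (f : WeakRep φ T) {u v : T.V}
    (ρ : T.graph.Walk u v) : Prop :=
  f.IsPreNielsen ρ ∧ ¬ ∃ (x : T.V) (ρ₁ : T.graph.Walk u x) (ρ₂ : T.graph.Walk x v),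
    ρ = ρ₁.append ρ₂ ∧ 0 < ρ₁.length ∧ 0 < ρ₂.length ∧
      f.IsPreNielsen ρ₁ ∧ f.IsPreNielsen ρ₂

end WeakRep

/-- `e` is a complete set of representatives of the `G`-orbits of edges of `T`. -/
def IsEdgeReps {G : Type} [Group G] (T : GTree G) {m : ℕ} (e : Fin m → T.graph.Dart) : Prop :=
  ∀ d : T.graph.Dart, ∃! i : Fin m, T.SameEdgeOrbit (e i) d

/-- The transition matrix of `f` with respect to the edge-orbit representatives `e`:
its `(i,j)` entry is the number of times `f (e j)` crosses a translate of `e i`. -/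
noncomputable def transitionMatrix {G : Type} [Group G] {φ : G →* G} {T : GTree G}
    (f : WeakRep φ T) {m : ℕ} (e : Fin m → T.graph.Dart) : Matrix (Fin m) (Fin m) ℝ :=
  fun i j => ((f.dwalk (e j)).darts.countP fun d => decide (T.SameEdgeOrbit (e i) d) : ℕ)

/-- A nonnegative square matrix is irreducible. -/
def MatrixIrreducible {m : ℕ} (A : Matrix (Fin m) (Fin m) ℝ) : Prop :=
  ∀ i j : Fin m, ∃ n : ℕ, 0 < n ∧ 0 < (A ^ n) i j

/-- `lam` is the Perron–Frobenius eigenvalue of `A`: it admits a positive eigenvector. -/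
def IsPFEigenvalue {m : ℕ} (A : Matrix (Fin m) (Fin m) ℝ) (lam : ℝ) : Prop :=
  ∃ u : Fin m → ℝ, (∀ i, 0 < u i) ∧ A.mulVec u = lam • u

/-- `f` is `𝒢`-irreducible: its transition matrix is irreducible. -/
noncomputable def GIrreducible {G : Type} [Group G] {φ : G →* G} {T : GTree G}
    (f : WeakRep φ T) {m : ℕ} (e : Fin m → T.graph.Dart) : Prop :=
  MatrixIrreducible (transitionMatrix f e)

/-- `SplitsAs w l` records that the walk `w` is the concatenation of the (nonempty) list
of walks `l`. -/
inductive SplitsAs {G : Type} [Group G] (T : GTree G) :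
    ∀ {u v : T.V}, T.graph.Walk u v → List (Σ u v : T.V, T.graph.Walk u v) → Prop
  | single {u v : T.V} (w : T.graph.Walk u v) : SplitsAs T w [⟨u, v, w⟩]
  | cons {u x v : T.V} (w₁ : T.graph.Walk u x) {w₂ : T.graph.Walk x v}
      {l : List (Σ u v : T.V, T.graph.Walk u v)} :
      SplitsAs T w₂ l → SplitsAs T (w₁.append w₂) (⟨u, x, w₁⟩ :: l)

/-- `C` is a bounded cancellation constant for `f`: for any reduced concatenation
`ρ = α·β`, tightening the image `f(ρ)` cancels at most a length `C` at the
concatenation point. -/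
noncomputable def IsBCC {G : Type} [Group G] {φ : G →* G} {T : GTree G}
    (f : WeakRep φ T) (C : ℝ) : Prop :=
  ∀ {a b c : T.V} (α : T.graph.Walk a b) (β : T.graph.Walk b c),
    T.Reduced (α.append β) →
    ∃ (x : T.V) (α₁ : T.graph.Walk (f.vmap a) x) (u : T.graph.Walk x (f.vmap b))
      (β₁ : T.graph.Walk x (f.vmap c)),
      T.tighten (f.mapWalk α) = α₁.append u ∧
      T.tighten (f.mapWalk β) = u.reverse.append β₁ ∧
      T.tighten (f.mapWalk (α.append β)) = α₁.append β₁ ∧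
      T.walkLen u ≤ C

/-!
Suppose `x ∈ T_∞` is fixed by `G`. Since `T` has finitely many orbits of edges, every vertex lies
within bounded `d_∞`-distance of the orbit `G·x`, which has `d_∞`-diameter zero; so `d_∞` is
bounded. As `f` multiplies `d_∞` by `λ > 1`, it follows that `d_∞ ≡ 0`.

On the other hand, a train track map sends an edge `eⱼ` to a legal, hence geodesic, path `fⁿ(eⱼ)`
which crosses the orbit of `eᵢ` exactly `(Aⁿ)ᵢⱼ` times, `A` being the transition matrix. With `L`
the vector of edge lengths and `u` a positive eigenvector for `λ`, this gives
`∑ⱼ uⱼ · d_n(eⱼ) = (L Aⁿ · u) / λⁿ = L · u > 0` for every `n`, so `d_∞` does not vanish on all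
edges.
-/

open SimpleGraph Filter Topology Matrix

-- `d a a = 0` is not required.
structure IsPseudoMetric {V : Type*} (d : V → V → ℝ) : Prop where
  nonneg : ∀ a b, 0 ≤ d a b
  symm : ∀ a b, d a b = d b a
  triangle : ∀ a b c, d a c ≤ d a b + d b c

namespace IsPseudoMetric

variable {V : Type*} {d : V → V → ℝ}

lemma comp_div (hd : IsPseudoMetric d) {W : Type*} (F : W → V) {c : ℝ} (hc : 0 ≤ c) :
    IsPseudoMetric fun a b => d (F a) (F b) / c where
  nonneg a b := div_nonneg (hd.nonneg _ _) hc
  symm a b := by rw [hd.symm]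
  triangle a b c := by
    rw [← add_div]
    exact div_le_div_of_nonneg_right (hd.triangle _ _ _) hc

lemma of_tendsto {ds : ℕ → V → V → ℝ} (hds : ∀ n, IsPseudoMetric (ds n))
    (hlim : ∀ a b, Tendsto (fun n => ds n a b) atTop (𝓝 (d a b))) : IsPseudoMetric d where
  nonneg a b := ge_of_tendsto' (hlim a b) fun n => (hds n).nonneg a b
  symm a b := tendsto_nhds_unique (hlim a b) (by simpa only [(hds _).symm b a] using hlim b a)
  triangle a b c := le_of_tendsto_of_tendsto' (hlim a c) ((hlim a b).add (hlim b c))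
    fun n => (hds n).triangle a b c

lemma exists_bound_of_forall_act_eq_zero (hd : IsPseudoMetric d) {G : Type*} (act : G → V → V)
    (hact : ∀ g a b, d (act g a) (act g b) = d a b) {S : Set V} (hS : S.Finite)
    (hcover : ∀ v, ∃ g, ∃ s ∈ S, act g s = v) {x : V} (hx : ∀ g, d (act g x) x = 0) :
    ∃ C, ∀ a b, d a b ≤ C := by
  obtain ⟨C, hC⟩ := (hS.image fun s => d s x).bddAbove
  have hnear : ∀ v, d v x ≤ C := by
    intro v
    obtain ⟨g, s, hs, rfl⟩ := hcover v
    calc d (act g s) x ≤ d (act g s) (act g x) + d (act g x) x := hd.triangle _ _ _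
      _ = d s x := by rw [hact, hx, add_zero]
      _ ≤ C := hC (Set.mem_image_of_mem _ hs)
  exact ⟨2 * C, fun a b => by linarith [hd.triangle a x b, hnear a, hnear b, hd.symm x b]⟩

lemma eq_zero_of_map_eq_mul (hd : IsPseudoMetric d) (F : V → V) {lam : ℝ} (hlam : 1 < lam)
    (hF : ∀ a b, d (F a) (F b) = lam * d a b) {C : ℝ} (hC : ∀ a b, d a b ≤ C) (a b : V) :
    d a b = 0 := by
  have hiter : ∀ n a b, d (F^[n] a) (F^[n] b) = lam ^ n * d a b := by
    intro n
    induction n with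
    | zero => simp
    | succ n ih =>
      intro a b
      rw [Function.iterate_succ_apply', Function.iterate_succ_apply', hF, ih, pow_succ,
        mul_comm _ lam, mul_assoc]
  by_contra hne
  have hpos : 0 < d a b := lt_of_le_of_ne (hd.nonneg a b) (Ne.symm hne)
  obtain ⟨n, hn⟩ := pow_unbounded_of_one_lt (C / d a b) hlam
  have hbound := hC (F^[n] a) (F^[n] b)
  rw [hiter] at hbound
  rw [div_lt_iff₀ hpos] at hn
  linarith

end IsPseudoMetric

namespace GTree

variable {G : Type} [Group G] (T : GTree G)

noncomputable def pathDist (u v : T.V) : ℝ := T.walkLen (T.geodesic u v)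

lemma geodesic_isPath (u v : T.V) : (T.geodesic u v).IsPath :=
  (T.isTree.existsUnique_path u v).choose_spec.1

lemma eq_geodesic {u v : T.V} {w : T.graph.Walk u v} (hw : w.IsPath) : w = T.geodesic u v :=
  (T.isTree.existsUnique_path u v).choose_spec.2 w hw

lemma walkLen_nonneg {u v : T.V} (w : T.graph.Walk u v) : 0 ≤ T.walkLen w :=
  List.sum_nonneg <| by
    simp only [List.mem_map]
    rintro _ ⟨d, -, rfl⟩
    exact (T.len_pos d.adj).le

lemma walkLen_append {u v w : T.V} (p : T.graph.Walk u v) (q : T.graph.Walk v w) :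
    T.walkLen (p.append q) = T.walkLen p + T.walkLen q := by
  simp only [walkLen, Walk.darts_append, List.map_append, List.sum_append]

lemma walkLen_reverse {u v : T.V} (p : T.graph.Walk u v) : T.walkLen p.reverse = T.walkLen p := by
  simp only [walkLen, Walk.darts_reverse, List.map_reverse, List.sum_reverse, List.map_map]
  congr 1
  exact List.map_congr_left fun d _ => T.len_symm d.snd d.fst

lemma walkLen_map_act (g : G) {u v : T.V} (p : T.graph.Walk u v) :
    T.walkLen (p.map (T.actHom g)) = T.walkLen p := by
  simp only [walkLen, Walk.darts_map, List.map_map]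
  congr 1
  exact List.map_congr_left fun d _ => T.act_len g d.fst d.snd

lemma pathDist_le_walkLen {u v : T.V} (w : T.graph.Walk u v) : T.pathDist u v ≤ T.walkLen w := by
  rw [pathDist, ← T.eq_geodesic w.bypass_isPath]
  obtain ⟨l, hperm, hsub⟩ := List.subperm_of_subset
    (Walk.darts_nodup_of_support_nodup w.bypass_isPath.support_nodup) w.darts_bypass_subset_darts
  calc T.walkLen w.bypass = (l.map fun d => T.len d.fst d.snd).sum := (hperm.map _).sum_eq.symm
    _ ≤ T.walkLen w := (hsub.map _).sum_le_sum fun _ hd => by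
        obtain ⟨d, -, rfl⟩ := List.mem_map.1 hd
        exact (T.len_pos d.adj).le

lemma isPseudoMetric_pathDist : IsPseudoMetric T.pathDist where
  nonneg u v := T.walkLen_nonneg _
  symm u v := by
    rw [pathDist, ← T.eq_geodesic (T.geodesic_isPath v u).reverse, walkLen_reverse]
    rfl
  triangle a b c :=
    (T.pathDist_le_walkLen ((T.geodesic a b).append (T.geodesic b c))).trans_eq
      (T.walkLen_append _ _)

lemma pathDist_act (g : G) (a b : T.V) : T.pathDist (T.act g a) (T.act g b) = T.pathDist a b := by
  have hmap : (T.geodesic a b).map (T.actHom g) = T.geodesic (T.act g a) (T.act g b) :=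
    T.eq_geodesic ((T.geodesic_isPath a b).map (T.act g).injective)
  rw [pathDist, pathDist, ← hmap]
  exact T.walkLen_map_act g _

lemma isPath_of_reduced {u v : T.V} {w : T.graph.Walk u v} (hw : T.Reduced w) : w.IsPath := by
  rw [T.isTree.isAcyclic.isPath_iff_isChain, Walk.edges, List.isChain_map,
    List.isChain_iff_getElem]
  intro i hi hedge
  have hadj : w.darts[i].snd = w.darts[i + 1].fst :=
    List.isChain_iff_getElem.1 w.isChain_dartAdj_darts i hi
  rcases (dart_edge_eq_iff _ _).1 hedge with heq | heq
  · exact w.darts[i].adj.ne (by rw [hadj, heq])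
  · exact List.isChain_iff_getElem.1 hw i hi (by rw [heq, Dart.symm_symm])

lemma pathDist_eq_walkLen_of_reduced {u v : T.V} {w : T.graph.Walk u v} (hw : T.Reduced w) :
    T.pathDist u v = T.walkLen w := by
  rw [pathDist, ← T.eq_geodesic (T.isPath_of_reduced hw)]

lemma dartAct_symm (g : G) (d : T.graph.Dart) : T.dartAct g d.symm = (T.dartAct g d).symm := rfl

lemma dartAct_one (d : T.graph.Dart) : T.dartAct 1 d = d := by
  ext <;> simp [dartAct, T.act_one]

lemma dartAct_dartAct (g h : G) (d : T.graph.Dart) :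
    T.dartAct g (T.dartAct h d) = T.dartAct (g * h) d := by
  ext <;> simp [dartAct, T.act_mul]

lemma sameEdgeOrbit_refl (d : T.graph.Dart) : T.SameEdgeOrbit d d := ⟨1, .inl (T.dartAct_one d)⟩

lemma sameEdgeOrbit_symm_iff {d₀ d : T.graph.Dart} :
    T.SameEdgeOrbit d₀ d.symm ↔ T.SameEdgeOrbit d₀ d := by
  simp only [SameEdgeOrbit, Dart.symm_symm, or_comm]

lemma sameEdgeOrbit_dartAct_iff (g : G) {d₀ d : T.graph.Dart} :
    T.SameEdgeOrbit d₀ (T.dartAct g d) ↔ T.SameEdgeOrbit d₀ d := by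
  have key : ∀ g d, T.SameEdgeOrbit d₀ d → T.SameEdgeOrbit d₀ (T.dartAct g d) := by
    rintro g d ⟨h, hh | hh⟩
    · exact ⟨g * h, .inl (by rw [← T.dartAct_dartAct, hh])⟩
    · exact ⟨g * h, .inr (by rw [← T.dartAct_dartAct, hh, T.dartAct_symm])⟩
  refine ⟨fun hd => ?_, key g d⟩
  simpa only [T.dartAct_dartAct, inv_mul_cancel, T.dartAct_one] using key g⁻¹ _ hd

lemma len_eq_of_sameEdgeOrbit {d d' : T.graph.Dart} (h : T.SameEdgeOrbit d d') :
    T.len d'.fst d'.snd = T.len d.fst d.snd := by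
  obtain ⟨g, rfl | hg⟩ := h
  · exact T.act_len g _ _
  · rw [← Dart.symm_symm d', ← hg]
    show T.len (T.act g d.snd) (T.act g d.fst) = _
    rw [T.act_len, T.len_symm]

variable {m : ℕ} {e : Fin m → T.graph.Dart}

lemma sameEdgeOrbit_edgeRep_iff (hreps : IsEdgeReps T e)
    {d : T.graph.Dart} {j : Fin m} (hj : T.SameEdgeOrbit (e j) d) (i : Fin m) :
    T.SameEdgeOrbit (e i) d ↔ i = j :=
  ⟨fun hi => (hreps d).unique hi hj, by rintro rfl; exact hj⟩

lemma exists_act_edgeRep_endpoint [Nontrivial T.V] (hreps : IsEdgeReps T e) (v : T.V) :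
    ∃ g i, T.act g (e i).fst = v ∨ T.act g (e i).snd = v := by
  obtain ⟨z, hz⟩ := T.isTree.connected.preconnected.exists_adj_of_nontrivial v
  obtain ⟨i, ⟨g, hg | hg⟩, -⟩ := hreps ⟨(v, z), hz⟩
  · exact ⟨g, i, .inl (congrArg (fun d : T.graph.Dart => d.fst) hg)⟩
  · exact ⟨g, i, .inr (congrArg (fun d : T.graph.Dart => d.snd) hg)⟩

variable (e) in
noncomputable def crossings {u v : T.V} (w : T.graph.Walk u v) : Fin m → ℝ :=
  fun i => (w.darts.countP fun d => decide (T.SameEdgeOrbit (e i) d) : ℕ)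

variable (e) in
def edgeLengths : Fin m → ℝ := fun i => T.len (e i).fst (e i).snd

lemma crossings_nil (u : T.V) : T.crossings e (Walk.nil : T.graph.Walk u u) = 0 := by
  ext i
  simp [crossings]

lemma crossings_append {u v w : T.V} (p : T.graph.Walk u v) (q : T.graph.Walk v w) :
    T.crossings e (p.append q) = T.crossings e p + T.crossings e q := by
  ext i
  simp [crossings, List.countP_append]

lemma crossings_cons (hreps : IsEdgeReps T e) {u x v : T.V} (h : T.graph.Adj u x)
    (p : T.graph.Walk x v) {j : Fin m} (hj : T.SameEdgeOrbit (e j) ⟨(u, x), h⟩) :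
    T.crossings e (Walk.cons h p) = Pi.single j 1 + T.crossings e p := by
  ext i
  by_cases hij : i = j <;>
    simp [crossings, T.sameEdgeOrbit_edgeRep_iff hreps hj i, hij, hj, add_comm]

lemma crossings_congr {u v u' v' : T.V} {w : T.graph.Walk u v} {w' : T.graph.Walk u' v'}
    (h : w.darts = w'.darts) : T.crossings e w = T.crossings e w' := by
  unfold crossings
  rw [h]

lemma crossings_edgeRep_toWalk (hreps : IsEdgeReps T e) (j : Fin m) :
    T.crossings e (e j).adj.toWalk = Pi.single j 1 := by
  rw [Adj.toWalk, T.crossings_cons hreps _ _ (j := j) (T.sameEdgeOrbit_refl _), crossings_nil,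
    add_zero]

lemma crossings_reverse {u v : T.V} (p : T.graph.Walk u v) :
    T.crossings e p.reverse = T.crossings e p := by
  ext i
  simp only [crossings, Walk.darts_reverse, List.countP_reverse, List.countP_map]
  congr 2
  ext d
  simp [T.sameEdgeOrbit_symm_iff]

lemma crossings_map_act (g : G) {u v : T.V} (p : T.graph.Walk u v) :
    T.crossings e (p.map (T.actHom g)) = T.crossings e p := by
  ext i
  simp only [crossings, Walk.darts_map, List.countP_map]
  congr 2
  funext d
  exact decide_eq_decide.2 (T.sameEdgeOrbit_dartAct_iff g)

lemma walkLen_eq_edgeLengths_dotProduct (hreps : IsEdgeReps T e) {u v : T.V}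
    (w : T.graph.Walk u v) : T.walkLen w = T.edgeLengths e ⬝ᵥ T.crossings e w := by
  induction w with
  | nil => simp [walkLen, crossings_nil]
  | cons h p ih =>
    obtain ⟨j, hj, -⟩ := hreps ⟨(_, _), h⟩
    rw [T.crossings_cons hreps h p hj, dotProduct_add, dotProduct_single_one, ← ih, edgeLengths,
      ← T.len_eq_of_sameEdgeOrbit hj]
    simp [walkLen]

end GTree

lemma InOuterSpace.nontrivial {G : Type} [Group G] {p : ℕ} {H : Fin p → Subgroup G} {T : GTree G}
    (hT : InOuterSpace H T) : Nontrivial T.V := by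
  obtain ⟨v⟩ := T.isTree.connected.nonempty
  by_contra h
  rw [not_nontrivial_iff_subsingleton] at h
  exact hT.nontrivial_action ⟨v, fun g => Subsingleton.elim _ _⟩

namespace WeakRep

variable {G : Type} [Group G] {φ : G →* G} {T : GTree G} (f : WeakRep φ T)
  {m : ℕ} {e : Fin m → T.graph.Dart}

lemma vmap_iterate_act (n : ℕ) (g : G) (z : T.V) :
    f.vmap^[n] (T.act g z) = T.act (iterHom G φ n g) (f.vmap^[n] z) := by
  induction n with
  | zero => rfl
  | succ n ih =>
    rw [Function.iterate_succ_apply', ih, f.equivariant, Function.iterate_succ_apply']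
    rfl

lemma head?_darts_dwalk_symm (d : T.graph.Dart) :
    (f.dwalk d.symm).darts.head? = (f.dwalk d).darts.getLast?.map Dart.symm := by
  rw [dwalk, f.emap_symm, Walk.darts_reverse, List.head?_reverse, List.getLast?_map]
  rfl

lemma head?_darts_mapWalk_cons (hf : f.IsTrainTrack) {u x v : T.V} (h : T.graph.Adj u x)
    (p : T.graph.Walk x v) :
    (f.mapWalk (.cons h p)).darts.head? = (f.dwalk ⟨(u, x), h⟩).darts.head? := by
  have hne : (f.dwalk ⟨(u, x), h⟩).darts ≠ [] := by
    rw [← List.length_pos_iff, Walk.length_darts]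
    exact hf.edges_nondegenerate _
  show ((f.emap h).append (f.mapWalk p)).darts.head? = _
  rw [Walk.darts_append]
  exact List.head?_append_of_ne_nil _ hne

lemma reduced_of_legalWalk {u v : T.V} {w : T.graph.Walk u v} (hw : f.LegalWalk w) :
    T.Reduced w :=
  hw.imp fun _ _ hturn heq => hturn.2 (by rw [heq])

lemma legalWalk_mapWalk (hf : f.IsTrainTrack) :
    ∀ {u v : T.V} (w : T.graph.Walk u v), f.LegalWalk w → f.LegalWalk (f.mapWalk w)
  | _, _, .nil, _ => List.isChain_nil
  | _, _, .cons h .nil, _ => by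
    show f.LegalWalk ((f.dwalk ⟨(_, _), h⟩).append .nil)
    rw [Walk.append_nil]
    exact hf.edges_legal _
  | _, _, .cons h (.cons h' p), hw => by
    rw [LegalWalk, Walk.darts_cons, Walk.darts_cons] at hw
    obtain ⟨hturn, hw⟩ := List.isChain_cons_cons.1 hw
    show List.IsChain _ ((f.dwalk ⟨(_, _), h⟩).append (f.mapWalk (.cons h' p))).darts
    rw [Walk.darts_append, List.isChain_append]
    refine ⟨hf.edges_legal _, legalWalk_mapWalk hf _ hw, fun x hx y hy => ?_⟩
    rw [f.head?_darts_mapWalk_cons hf] at hy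
    refine hf.turns_legal _ _ hturn x.symm y ?_ hy
    rw [head?_darts_dwalk_symm, Option.mem_def.1 hx]
    rfl

lemma legalWalk_mapWalkIter (hf : f.IsTrainTrack) (n : ℕ) :
    ∀ {u v : T.V} (w : T.graph.Walk u v), f.LegalWalk w → f.LegalWalk (f.mapWalkIter n w) := by
  induction n with
  | zero => exact fun _ hw => hw
  | succ n ih =>
    intro u v w hw
    simpa [mapWalkIter, LegalWalk] using ih _ (f.legalWalk_mapWalk hf w hw)


lemma crossings_dwalk_dartAct (g : G) (d : T.graph.Dart) :
    T.crossings e (f.dwalk (T.dartAct g d)) = T.crossings e (f.dwalk d) :=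
  (T.crossings_congr (f.emap_equivariant g d.adj)).trans (T.crossings_map_act _ _)

lemma crossings_dwalk_symm (d : T.graph.Dart) :
    T.crossings e (f.dwalk d.symm) = T.crossings e (f.dwalk d) :=
  (T.crossings_congr (by rw [dwalk, f.emap_symm]; rfl)).trans (T.crossings_reverse _)

lemma crossings_dwalk_of_sameEdgeOrbit {j : Fin m} {d : T.graph.Dart}
    (hd : T.SameEdgeOrbit (e j) d) : T.crossings e (f.dwalk d) = T.crossings e (f.dwalk (e j)) := by
  obtain ⟨g, rfl | hg⟩ := hd
  · exact f.crossings_dwalk_dartAct g (e j)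
  · rw [← Dart.symm_symm d, ← hg, f.crossings_dwalk_symm, f.crossings_dwalk_dartAct]

lemma crossings_mapWalk (hreps : IsEdgeReps T e) :
    ∀ {u v : T.V} (w : T.graph.Walk u v),
      T.crossings e (f.mapWalk w) = transitionMatrix f e *ᵥ T.crossings e w
  | _, _, .nil => by simp [mapWalk, GTree.crossings_nil]
  | _, _, .cons h p => by
    obtain ⟨j, hj, -⟩ := hreps ⟨(_, _), h⟩
    show T.crossings e ((f.dwalk ⟨(_, _), h⟩).append (f.mapWalk p)) = _
    rw [T.crossings_append, f.crossings_dwalk_of_sameEdgeOrbit hj, crossings_mapWalk hreps p,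
      T.crossings_cons hreps h p hj, mulVec_add, mulVec_single_one]
    rfl

lemma crossings_mapWalkIter (hreps : IsEdgeReps T e) (n : ℕ) :
    ∀ {u v : T.V} (w : T.graph.Walk u v),
      T.crossings e (f.mapWalkIter n w) = transitionMatrix f e ^ n *ᵥ T.crossings e w := by
  induction n with
  | zero => simp [mapWalkIter]
  | succ n ih =>
    intro u v w
    rw [mapWalkIter, T.crossings_congr (Walk.darts_copy _ _ _), ih, f.crossings_mapWalk hreps,
      mulVec_mulVec, pow_succ]

lemma pathDist_iterate_edgeRep (hf : f.IsTrainTrack) (hreps : IsEdgeReps T e) (n : ℕ)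
    (j : Fin m) :
    T.pathDist (f.vmap^[n] (e j).fst) (f.vmap^[n] (e j).snd)
      = (T.edgeLengths e ᵥ* transitionMatrix f e ^ n) j := by
  have hlegal := f.legalWalk_mapWalkIter hf n (e j).adj.toWalk (List.isChain_singleton _)
  rw [T.pathDist_eq_walkLen_of_reduced (f.reduced_of_legalWalk hlegal),
    T.walkLen_eq_edgeLengths_dotProduct hreps, f.crossings_mapWalkIter hreps,
    T.crossings_edgeRep_toWalk hreps, dotProduct_mulVec, dotProduct_single_one]

noncomputable def rescaledDist (lam : ℝ) (n : ℕ) (x y : T.V) : ℝ :=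
  T.pathDist (f.vmap^[n] x) (f.vmap^[n] y) / lam ^ n

lemma isPseudoMetric_rescaledDist {lam : ℝ} (hlam : 0 ≤ lam) (n : ℕ) :
    IsPseudoMetric (f.rescaledDist lam n) :=
  T.isPseudoMetric_pathDist.comp_div _ (pow_nonneg hlam n)

lemma rescaledDist_act (lam : ℝ) (n : ℕ) (g : G) (x y : T.V) :
    f.rescaledDist lam n (T.act g x) (T.act g y) = f.rescaledDist lam n x y := by
  simp only [rescaledDist, vmap_iterate_act, GTree.pathDist_act]

lemma rescaledDist_vmap {lam : ℝ} (hlam : lam ≠ 0) (n : ℕ) (x y : T.V) :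
    f.rescaledDist lam n (f.vmap x) (f.vmap y) = lam * f.rescaledDist lam (n + 1) x y := by
  simp only [rescaledDist, ← Function.iterate_succ_apply, pow_succ]
  field_simp

lemma sum_mul_rescaledDist_edgeRep (hf : f.IsTrainTrack) (hreps : IsEdgeReps T e) {lam : ℝ}
    (hlam : lam ≠ 0) {u : Fin m → ℝ} (hu : transitionMatrix f e *ᵥ u = lam • u) (n : ℕ) :
    ∑ j, u j * f.rescaledDist lam n (e j).fst (e j).snd = T.edgeLengths e ⬝ᵥ u := by
  have hpow : transitionMatrix f e ^ n *ᵥ u = lam ^ n • u := by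
    induction n with
    | zero => simp
    | succ n ih =>
      rw [pow_succ', ← mulVec_mulVec, ih, mulVec_smul, hu, smul_smul, pow_succ]
  calc ∑ j, u j * f.rescaledDist lam n (e j).fst (e j).snd
      = (T.edgeLengths e ᵥ* transitionMatrix f e ^ n) ⬝ᵥ u / lam ^ n := by
        simp only [rescaledDist, f.pathDist_iterate_edgeRep hf hreps, dotProduct, Finset.sum_div]
        exact Finset.sum_congr rfl fun j _ => by ring
    _ = T.edgeLengths e ⬝ᵥ u := by
        rw [← dotProduct_mulVec, hpow, dotProduct_smul, smul_eq_mul,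
          mul_div_cancel_left₀ _ (pow_ne_zero n hlam)]

def IsLimitDist (lam : ℝ) (dinf : T.V → T.V → ℝ) : Prop :=
  ∀ x y, Tendsto (fun n => f.rescaledDist lam n x y) atTop (𝓝 (dinf x y))

namespace IsLimitDist

variable {f} {lam : ℝ} {dinf : T.V → T.V → ℝ}

lemma isPseudoMetric (hdinf : f.IsLimitDist lam dinf) (hlam : 0 ≤ lam) : IsPseudoMetric dinf :=
  .of_tendsto (f.isPseudoMetric_rescaledDist hlam) hdinf

lemma act (hdinf : f.IsLimitDist lam dinf) (g : G) (x y : T.V) :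
    dinf (T.act g x) (T.act g y) = dinf x y :=
  tendsto_nhds_unique (by simpa only [rescaledDist_act] using hdinf (T.act g x) (T.act g y))
    (hdinf x y)

lemma vmap (hdinf : f.IsLimitDist lam dinf) (hlam : lam ≠ 0) (x y : T.V) :
    dinf (f.vmap x) (f.vmap y) = lam * dinf x y :=
  tendsto_nhds_unique
    (by simpa only [f.rescaledDist_vmap hlam, Function.comp_def] using hdinf (f.vmap x) (f.vmap y))
    (((hdinf x y).comp (tendsto_add_atTop_nat 1)).const_mul lam)

lemma sum_mul_edgeRep (hdinf : f.IsLimitDist lam dinf) (hf : f.IsTrainTrack)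
    (hreps : IsEdgeReps T e) (hlam : lam ≠ 0) {u : Fin m → ℝ}
    (hu : transitionMatrix f e *ᵥ u = lam • u) :
    ∑ j, u j * dinf (e j).fst (e j).snd = T.edgeLengths e ⬝ᵥ u :=
  tendsto_nhds_unique (tendsto_finsetSum _ fun j _ => (hdinf _ _).const_mul (u j))
    (tendsto_const_nhds.congr fun n => (f.sum_mul_rescaledDist_edgeRep hf hreps hlam hu n).symm)

end IsLimitDist

end WeakRep

theorem limit_tree_action_nontrivial_general
    (G : Type) [Group G] (p : ℕ) (H : Fin p → Subgroup G)
    (φ : G →* G)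
    (T : GTree G) (hT : InOuterSpace H T)
    (f : WeakRep φ T) (hf : f.IsTrainTrack)
    (m : ℕ) (e : Fin m → T.graph.Dart) (hreps : IsEdgeReps T e)
    (lam : ℝ) (hPF : IsPFEigenvalue (transitionMatrix f e) lam) (hlam : 1 < lam)
    (dinf : T.V → T.V → ℝ)
    (hlim : ∀ x y : T.V,
      Filter.Tendsto
        (fun n : ℕ => T.walkLen (T.geodesic (f.vmap^[n] x) (f.vmap^[n] y)) / lam ^ n)
        Filter.atTop (nhds (dinf x y))) :
    ¬ ∃ x : T.V, ∀ g : G, dinf (T.act g x) x = 0 := by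
  rintro ⟨x, hx⟩
  have hdinf : f.IsLimitDist lam dinf := hlim
  have := hT.nontrivial
  have hd := hdinf.isPseudoMetric (by linarith)
  have hcover : ∀ v, ∃ g, ∃ s ∈ Set.range (fun i => (e i).fst) ∪ Set.range (fun i => (e i).snd),
      T.act g s = v := fun v => by
    obtain ⟨g, i, h | h⟩ := T.exists_act_edgeRep_endpoint hreps v
    exacts [⟨g, _, .inl ⟨i, rfl⟩, h⟩, ⟨g, _, .inr ⟨i, rfl⟩, h⟩]
  obtain ⟨C, hC⟩ := hd.exists_bound_of_forall_act_eq_zero (fun g => T.act g) hdinf.act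
    ((Set.finite_range _).union (Set.finite_range _)) hcover hx
  have hzero := hd.eq_zero_of_map_eq_mul f.vmap hlam (hdinf.vmap (by positivity)) hC
  obtain ⟨u, hu, hAu⟩ := hPF
  have hsum := hdinf.sum_mul_edgeRep hf hreps (by positivity) hAu
  simp only [hzero, mul_zero, Finset.sum_const_zero] at hsum
  obtain ⟨-, i, -⟩ := T.exists_act_edgeRep_endpoint hreps x
  have hpos : 0 < T.edgeLengths e ⬝ᵥ u :=
    Finset.sum_pos (fun j _ => mul_pos (T.len_pos (e j).adj) (hu j)) ⟨i, Finset.mem_univ _⟩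
  exact hpos.ne hsum

/-- Let `f : T → T` be a train track map with stretch factor `λ_f`
representing `φ`, and let `T_∞` be the limit ℝ-tree of the rescaled metrics
`d_n(x,y) = d_T(fⁿ(x), fⁿ(y))/λ_fⁿ`. Then the action of `G` on `T_∞` is non-trivial:
no point of `T_∞` is fixed by all of `G`. -/
theorem limit_tree_action_nontrivial
    (G : Type) [Group G] (p k : ℕ) (H : Fin p → Subgroup G) (a : Fin k → G)
    (hdecomp : IsFreeProductDecomp G p k H a)
    (φ : G →* G) (hinj : Function.Injective φ)
    (hfull : FullyIrreducibleRel G H φ)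
    (T : GTree G) (hT : InOuterSpace H T)
    (f : WeakRep φ T) (hf : f.IsTrainTrack)
    (m : ℕ) (e : Fin m → T.graph.Dart) (hreps : IsEdgeReps T e)
    (lam : ℝ) (hPF : IsPFEigenvalue (transitionMatrix f e) lam) (hlam : 1 < lam)
    (dinf : T.V → T.V → ℝ)
    (hlim : ∀ x y : T.V,
      Filter.Tendsto
        (fun n : ℕ => T.walkLen (T.geodesic (f.vmap^[n] x) (f.vmap^[n] y)) / lam ^ n)
        Filter.atTop (nhds (dinf x y))) :
    ¬ ∃ x : T.V, ∀ g : G, dinf (T.act g x) x = 0 :=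
  limit_tree_action_nontrivial_general G p H φ T hT f hf m e hreps lam hPF hlam dinf hlim

end RelTT
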